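/- arXiv:2101.06527 — 2 statements merged into one kernel-verified Lean document; each statement's English description precedes it below -/
import Mathlib

section
/- (Prime Ideal Theorem) Let A be a multiring, I ⊆ A an ideal and S ⊆ A a multiplicative set with I ∩ S = ∅. Then there exists a prime ideal p of A with I ⊆ p and p ∩ S = ∅. -/
universe u v

/-- A multiring: a commutative monoid with a multivalued addition. -/
class Multiring (A : Type u) extends CommMonoid A, Zero A, Neg A where
  /-- the multivalued sum: `madd b c` is the set `b + c` -/
  madd : A → A → Set A
  madd_nonempty : ∀ a b : A, (madd a b).Nonempty
  madd_rev_left : ∀ a b c : A, a ∈ madd b c → c ∈ madd (-b) a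
  madd_rev_right : ∀ a b c : A, a ∈ madd b c → b ∈ madd a (-c)
  mem_madd_zero : ∀ a b : A, a ∈ madd b 0 ↔ a = b
  madd_assoc : ∀ a b c g x : A, g ∈ madd a b → x ∈ madd g c →
    ∃ h ∈ madd b c, x ∈ madd a h
  madd_comm : ∀ a b : A, madd a b = madd b a
  mul_zero' : ∀ a : A, a * 0 = 0
  madd_mul : ∀ a b c d : A, a ∈ madd b c → a * d ∈ madd (b * d) (c * d)

namespace Multiring

variable {A : Type u} [Multiring A]

/-- the iterated multivalued sum `x₁ + ⋯ + xₙ = {x₁} + (x₂ + ⋯ + xₙ)` of a list -/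
def listSum : List A → Set A
  | [] => {(0 : A)}
  | a :: l => {x : A | ∃ y ∈ listSum l, x ∈ madd a y}

/-- an ideal of a multiring: a nonempty subset with `I + I ⊆ I` and `A·I ⊆ I` -/
def IsIdeal (I : Set A) : Prop :=
  I.Nonempty ∧ (∀ a ∈ I, ∀ b ∈ I, madd a b ⊆ I) ∧ ∀ a : A, ∀ b ∈ I, a * b ∈ I

/-- a prime ideal: a proper ideal such that `a*b ∈ p → a ∈ p ∨ b ∈ p` -/
def IsPrimeIdeal (I : Set A) : Prop :=
  IsIdeal I ∧ (1 : A) ∉ I ∧ ∀ a b : A, a * b ∈ I → a ∈ I ∨ b ∈ I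

/-- a maximal ideal: a proper ideal maximal among proper ideals -/
def IsMaximalIdeal (I : Set A) : Prop :=
  IsIdeal I ∧ (1 : A) ∉ I ∧ ∀ J : Set A, IsIdeal J → (1 : A) ∉ J → I ⊆ J → J = I

/-- a multiplicative subset -/
def IsMultiplicative (S : Set A) : Prop :=
  (1 : A) ∈ S ∧ ∀ s ∈ S, ∀ t ∈ S, s * t ∈ S

/-- a hyperring: a multiring with the strong distributivity property -/
def IsHyperring (A : Type u) [Multiring A] : Prop :=
  ∀ x b c d : A, x ∈ madd (b * d) (c * d) → ∃ a ∈ madd b c, x = a * d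

/-- a von Neumann (regular) hyperring -/
def IsVonNeumann (A : Type u) [Multiring A] : Prop :=
  IsHyperring A ∧ ∀ a : A, ∃ b : A, a = a * a * b

/-- the equivalence modulo an ideal `I`: `a ∼_I b` iff `(a + (-b)) ∩ I ≠ ∅`;
this is equality of classes in the quotient multiring `A/I`. -/
def simI (I : Set A) (a b : A) : Prop := ∃ x ∈ madd a (-b), x ∈ I

/-- membership of classes in the multivalued sum of the quotient `A/I`:
`[a] ∈ [b] + [c]` iff `a ∈ b + c + i` for some `i ∈ I`. -/
def qmemI (I : Set A) (a b c : A) : Prop := ∃ i ∈ I, ∃ w ∈ madd c i, a ∈ madd b w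

/-- representatives `x` with `[x] ∈ [c₁] + ⋯ + [cₙ]` in the quotient `A/I` -/
def qlistSumI (I : Set A) : List A → Set A
  | [] => {x : A | simI I x 0}
  | c :: l => {x : A | ∃ y ∈ qlistSumI I l, qmemI I x c y}

/-- the quotient multiring `A/I` is a multifield: `1 ≠ 0` and every nonzero
element is weak-invertible -/
def QuotIsMultifield (I : Set A) : Prop :=
  ¬ simI I 1 0 ∧
    ∀ a : A, ¬ simI I a 0 →
      ∃ l : List A, l ≠ [] ∧ (1 : A) ∈ qlistSumI I (l.map fun b => a * b)

/-- the quotient multiring `A/I` is a hyperfield: `1 ≠ 0` and every nonzero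
element is invertible -/
def QuotIsHyperfield (I : Set A) : Prop :=
  ¬ simI I 1 0 ∧ ∀ a : A, ¬ simI I a 0 → ∃ b : A, simI I (a * b) 1

/-- the Marshall equivalence associated to a multiplicative set `S`:
`a ∼_S b` iff `as = bt` for some `s,t ∈ S`; this is equality of classes in the
Marshall quotient `A/ₘS`. -/
def simM (S : Set A) (a b : A) : Prop := ∃ s ∈ S, ∃ t ∈ S, a * s = b * t

/-- `S̄ = {x : xs ∈ S for some s ∈ S}` -/
def mbar (S : Set A) : Set A := {x : A | ∃ s ∈ S, x * s ∈ S}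

/-- membership of classes in the multivalued sum of the Marshall quotient `A/ₘS`:
`[a] ∈ [b] + [c]` iff `as ∈ bt + cu` for some `s,t,u ∈ S`. -/
def qmemM (S : Set A) (a b c : A) : Prop :=
  ∃ s ∈ S, ∃ t ∈ S, ∃ u ∈ S, a * s ∈ madd (b * t) (c * u)

/-- representatives `x` with `[x] ∈ [c₁] + ⋯ + [cₙ]` in the Marshall quotient `A/ₘS` -/
def qlistSumM (S : Set A) : List A → Set A
  | [] => {x : A | simM S x 0}
  | c :: l => {x : A | ∃ y ∈ qlistSumM S l, qmemM S x c y}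

/-- the multivalued sum of the hyperfield `3 = {-1, 0, 1}` -/
def signAdd : SignType → SignType → Set SignType
  | SignType.zero, x => {x}
  | x, SignType.zero => {x}
  | SignType.pos, SignType.pos => {SignType.pos}
  | SignType.neg, SignType.neg => {SignType.neg}
  | _, _ => Set.univ

/-- a multiring morphism `A → 3`, i.e. an order of `A` -/
def IsSignMorphism (σ : A → SignType) : Prop :=
  (∀ a b c : A, a ∈ madd b c → σ a ∈ signAdd (σ b) (σ c)) ∧
  (∀ a b : A, σ (a * b) = σ a * σ b) ∧
  (∀ a : A, σ (-a) = -(σ a)) ∧ σ 0 = 0 ∧ σ 1 = 1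

/-- a prime cone of a multiring -/
def IsPrimeCone (P : Set A) : Prop :=
  (∀ a : A, a * a ∈ P) ∧ (∀ a ∈ P, ∀ b ∈ P, madd a b ⊆ P) ∧
  (∀ a ∈ P, ∀ b ∈ P, a * b ∈ P) ∧ (∀ a : A, a ∈ P ∨ -a ∈ P) ∧
  IsPrimeIdeal {x : A | x ∈ P ∧ -x ∈ P}

open Classical in
/-- the map `σ_P : A → 3` associated to a prime cone `P` -/
noncomputable def sigmaOf (P : Set A) (a : A) : SignType :=
  if a ∈ P ∧ -a ∈ P then 0 else if a ∈ P then 1 else -1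

/-- `ΣA²`: the set of elements lying in some finite sum of squares -/
def SumsOfSquares (A : Type u) [Multiring A] : Set A :=
  {x : A | ∃ l : List A, l ≠ [] ∧ x ∈ listSum (l.map fun a => a * a)}

/-- a multiring is semi-real when `-1 ∉ ΣA²` -/
def IsSemiReal (A : Type u) [Multiring A] : Prop := (-(1 : A)) ∉ SumsOfSquares A

/-- a real reduced multiring -/
def IsRealReduced (A : Type u) [Multiring A] : Prop :=
  IsSemiReal A ∧ (∀ a : A, a * a * a = a) ∧
  (∀ a b : A, madd a (a * b * b) = {a}) ∧
  (∀ a b : A, ∃ c : A, madd (a * a) (b * b) = {c})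

/-- a hyperfield: a hyperring with `1 ≠ 0` and all nonzero elements invertible -/
def IsHyperfield (A : Type u) [Multiring A] : Prop :=
  IsHyperring A ∧ (1 : A) ≠ 0 ∧ ∀ a : A, a ≠ 0 → ∃ b : A, a * b = 1

/-- a morphism of multirings -/
def IsMorphism {B : Type v} [Multiring B] (f : A → B) : Prop :=
  (∀ a b c : A, a ∈ madd b c → f a ∈ madd (f b) (f c)) ∧
  (∀ a b : A, f (a * b) = f a * f b) ∧
  (∀ a : A, f (-a) = -(f a)) ∧ f 0 = 0 ∧ f 1 = 1

/-- the radical `√α = {x : xⁿ ∈ α for some n ≥ 1}` of an ideal -/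
def radical (α : Set A) : Set A := {x : A | ∃ n : ℕ, 1 ≤ n ∧ x ^ n ∈ α}

/-- the ideal `(x) = ∪ {t₁x + ⋯ + tₙx}` generated by `x` -/
def genIdeal (x : A) : Set A :=
  {y : A | ∃ l : List A, l ≠ [] ∧ y ∈ listSum (l.map fun t => t * x)}

/-- `S_a = {x : aⁿ ∈ (x) for some n ≥ 0}` -/
def Sgen (a : A) : Set A := {x : A | ∃ n : ℕ, a ^ n ∈ genIdeal x}

/-- `a` is weak-invertible when `1 ∈ ab₁ + ⋯ + abₙ` for some `b₁,…,bₙ` -/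
def WeakInvertible (a : A) : Prop :=
  ∃ l : List A, l ≠ [] ∧ (1 : A) ∈ listSum (l.map fun b => a * b)

/-- the prime spectrum of a multiring -/
abbrev Spec (A : Type u) [Multiring A] : Type u := {p : Set A // IsPrimeIdeal p}

/-- the spectral topology on `spec A`, generated by the sets `D(a) = {p : a ∉ p}` -/
instance : TopologicalSpace (Spec A) :=
  TopologicalSpace.generateFrom {U : Set (Spec A) | ∃ a : A, U = {p : Spec A | a ∉ p.1}}

/-- the Marshall quotient `A/ₘS` is a real reduced multiring (expressed on
representatives) -/
def QuotIsRealReduced (S : Set A) : Prop :=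
  (∀ l : List A, l ≠ [] → (-(1 : A)) ∉ qlistSumM S (l.map fun a => a * a)) ∧
  (∀ a : A, simM S (a * a * a) a) ∧
  (∀ a b x : A, qmemM S x a (a * b * b) ↔ simM S x a) ∧
  (∀ a b : A, ∃ c : A, ∀ x : A, qmemM S x (a * a) (b * b) ↔ simM S x c)

/-- the Marshall quotient `A/ₘS` is a geometric von Neumann hyperring
(expressed on representatives): it is a hyperring, von Neumann regular, and
`e + eᶜ = {1}` for every idempotent `e` -/
def QuotGeometricVN (S : Set A) : Prop :=
  (∀ x b c d : A, qmemM S x (b * d) (c * d) → ∃ a : A, qmemM S a b c ∧ simM S x (a * d)) ∧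
  (∀ a : A, ∃ b : A, simM S a (a * a * b)) ∧
  (∀ e x : A, simM S (e * e) e → qmemM S x 1 (-e) → simM S (e * x) 0 →
    ∀ y : A, qmemM S y e x ↔ simM S y 1)

/-- a von Neumann subgroup: a multiplicative set such that for every idempotent
`a` (with complement `aᶜ`) and every `x ∈ D_S(a, aᶜ)` there is `s ∈ S` with `xs ∈ S` -/
def IsVNSubgroup (S : Set A) : Prop :=
  IsMultiplicative S ∧
    ∀ a x ac : A, a * a = a → ac ∈ madd 1 (-a) → a * ac = 0 →
      (∃ u ∈ S, ∃ v ∈ S, ∃ w ∈ S, x * u ∈ madd (a * v) (ac * w)) →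
      ∃ s ∈ S, x * s ∈ S

/-- a preorder of a multiring -/
def IsPreorderSet (T : Set A) : Prop :=
  (∀ a : A, a * a ∈ T) ∧ (∀ a ∈ T, ∀ b ∈ T, a * b ∈ T) ∧ (∀ a ∈ T, ∀ b ∈ T, madd a b ⊆ T)

/-- `1 + T = ∪ {1 + t : t ∈ T}` -/
def oneAdd (T : Set A) : Set A := {x : A | ∃ t ∈ T, x ∈ madd 1 t}

/-- `ΣḞ²`: elements lying in some finite sum of squares of nonzero elements -/
def sumSqNonzero (A : Type u) [Multiring A] : Set A :=
  {x : A | ∃ l : List A, l ≠ [] ∧ (∀ a ∈ l, a ≠ 0) ∧ x ∈ listSum (l.map fun a => a * a)}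

end Multiring

/-!
By Zorn's lemma (a union of a chain of ideals is an ideal) there is an ideal `p ⊇ I` maximal among
the ideals disjoint from `S`. If `ab ∈ p` with `a, b ∉ p`, maximality makes `p + (a)` and `p + (b)`
meet `S`, say in `s₁` and `s₂`. As `ab ∈ p`, multiplying `p + (b)` by `a` lands in `p`, so `s₂a ∈ p`;
then multiplying `p + (a)` by `s₂` lands in `p`, so `s₁s₂ ∈ p ∩ S`.
-/

namespace Multiring

variable {A : Type u} [Multiring A]

lemma madd_assoc' {a b c h x : A} (hh : h ∈ madd b c) (hx : x ∈ madd a h) :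
    ∃ g ∈ madd a b, x ∈ madd g c := by
  rw [madd_comm] at hx
  obtain ⟨m, hm, hx⟩ := madd_assoc b c a h x hh hx
  rw [madd_comm] at hx
  obtain ⟨g, hg, hx⟩ := madd_assoc c a b m x hm hx
  exact ⟨g, hg, by rwa [madd_comm]⟩

lemma exists_madd_add_add_comm {z x x' a b c d : A} (hz : z ∈ madd x x')
    (hx : x ∈ madd a b) (hx' : x' ∈ madd c d) :
    ∃ p ∈ madd a c, ∃ q ∈ madd b d, z ∈ madd p q := by
  obtain ⟨h, hh, hz⟩ := madd_assoc a b x' x z hx hz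
  rw [madd_comm] at hh
  obtain ⟨k, hk, hh⟩ := madd_assoc c d b x' h hx' hh
  obtain ⟨g, hg, hz⟩ := madd_assoc' hh hz
  rw [madd_comm] at hk
  exact ⟨g, hg, k, hk, hz⟩

lemma mul_mem_listSum_map_mul {l : List A} {y : A} (hy : y ∈ listSum l) (c : A) :
    y * c ∈ listSum (l.map (· * c)) := by
  induction l generalizing y with
  | nil =>
    rw [show y = 0 from hy, mul_comm, mul_zero']
    rfl
  | cons a t ih =>
    obtain ⟨z, hz, hy⟩ := hy
    exact ⟨z * c, ih hz, madd_mul y a z c hy⟩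

lemma mem_listSum_append {l₁ l₂ : List A} {y₁ y₂ y : A} (h₁ : y₁ ∈ listSum l₁)
    (h₂ : y₂ ∈ listSum l₂) (hy : y ∈ madd y₁ y₂) : y ∈ listSum (l₁ ++ l₂) := by
  induction l₁ generalizing y₁ y with
  | nil =>
    rw [show y₁ = 0 from h₁, madd_comm, mem_madd_zero] at hy
    rwa [hy]
  | cons a t ih =>
    obtain ⟨w, hw, h₁⟩ := h₁
    obtain ⟨h, hh, hy⟩ := madd_assoc a w y₂ y₁ y h₁ hy
    exact ⟨h, ih hw hh, hy⟩

namespace IsIdeal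

variable {J : Set A}

lemma zero_mem (hJ : IsIdeal J) : (0 : A) ∈ J := by
  obtain ⟨b, hb⟩ := hJ.1
  simpa only [mul_comm, mul_zero'] using hJ.2.2 0 b hb

lemma listSum_subset (hJ : IsIdeal J) {l : List A} (hl : ∀ x ∈ l, x ∈ J) : listSum l ⊆ J := by
  induction l with
  | nil => rintro x rfl; exact hJ.zero_mem
  | cons a t ih =>
    rintro x ⟨y, hy, hx⟩
    exact hJ.2.1 a (hl a List.mem_cons_self) y
      (ih (fun z hz => hl z (List.mem_cons_of_mem a hz)) hy) hx

end IsIdeal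

lemma isIdeal_sUnion {c : Set (Set A)} (hc : ∀ J ∈ c, IsIdeal J) (hchain : IsChain (· ⊆ ·) c)
    (hne : c.Nonempty) : IsIdeal (⋃₀ c) := by
  refine ⟨?_, ?_, ?_⟩
  · obtain ⟨J, hJ⟩ := hne
    obtain ⟨x, hx⟩ := (hc J hJ).1
    exact ⟨x, J, hJ, hx⟩
  · rintro x ⟨J₁, hJ₁, hx⟩ y ⟨J₂, hJ₂, hy⟩ z hz
    rcases hchain.total hJ₁ hJ₂ with h | h
    · exact ⟨J₂, hJ₂, (hc J₂ hJ₂).2.1 x (h hx) y hy hz⟩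
    · exact ⟨J₁, hJ₁, (hc J₁ hJ₁).2.1 x hx y (h hy) hz⟩
  · rintro d x ⟨J, hJ, hx⟩
    exact ⟨J, hJ, (hc J hJ).2.2 d x hx⟩

/-- The ideal `J + (a)`. -/
def adjoinIdeal (J : Set A) (a : A) : Set A :=
  {x : A | ∃ j ∈ J, ∃ l : List A, ∃ y ∈ listSum (l.map (· * a)), x ∈ madd j y}

section adjoinIdeal

variable {J : Set A}

lemma subset_adjoinIdeal (a : A) : J ⊆ adjoinIdeal J a :=
  fun x hx => ⟨x, hx, [], 0, rfl, (mem_madd_zero x x).mpr rfl⟩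

lemma mem_adjoinIdeal_self (hJ : IsIdeal J) (a : A) : a ∈ adjoinIdeal J a := by
  refine ⟨0, hJ.zero_mem, [1], a, ⟨0, rfl, ?_⟩, ?_⟩
  · exact (mem_madd_zero _ _).mpr (one_mul a).symm
  · rw [madd_comm, mem_madd_zero]

lemma isIdeal_adjoinIdeal (hJ : IsIdeal J) (a : A) : IsIdeal (adjoinIdeal J a) := by
  refine ⟨⟨a, mem_adjoinIdeal_self hJ a⟩, ?_, ?_⟩
  · rintro x ⟨j₁, hj₁, l₁, y₁, hy₁, hx⟩ x' ⟨j₂, hj₂, l₂, y₂, hy₂, hx'⟩ z hz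
    obtain ⟨j, hj, y, hy, hz⟩ := exists_madd_add_add_comm hz hx hx'
    refine ⟨j, hJ.2.1 j₁ hj₁ j₂ hj₂ hj, l₁ ++ l₂, y, ?_, hz⟩
    rw [List.map_append]
    exact mem_listSum_append hy₁ hy₂ hy
  · rintro c x ⟨j, hj, l, y, hy, hx⟩
    refine ⟨c * j, hJ.2.2 c j hj, l.map (· * c), y * c, ?_, ?_⟩
    · have hyc := mul_mem_listSum_map_mul hy c
      simp only [List.map_map] at hyc ⊢
      convert hyc using 3
      funext t
      exact mul_right_comm t c a
    · simpa only [mul_comm _ c] using madd_mul x j y c hx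

lemma IsIdeal.mul_mem_of_mem_adjoinIdeal (hJ : IsIdeal J) {a s c : A}
    (hs : s ∈ adjoinIdeal J a) (hca : c * a ∈ J) : s * c ∈ J := by
  obtain ⟨j, hj, l, y, hy, hs⟩ := hs
  have hyc : y * c ∈ J := by
    refine hJ.listSum_subset ?_ (mul_mem_listSum_map_mul hy c)
    simp only [List.map_map, List.mem_map, Function.comp_apply]
    rintro _ ⟨t, -, rfl⟩
    rw [mul_right_comm, mul_assoc]
    exact hJ.2.2 t _ hca
  have hjc : j * c ∈ J := by rw [mul_comm]; exact hJ.2.2 c j hj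
  exact hJ.2.1 _ hjc _ hyc (madd_mul s j y c hs)

end adjoinIdeal

lemma exists_maximal_isIdeal_disjoint {I S : Set A} (hI : IsIdeal I) (hIS : Disjoint I S) :
    ∃ p, I ⊆ p ∧ Maximal (fun J => IsIdeal J ∧ Disjoint J S) p := by
  refine zorn_subset_nonempty _ (fun c hc hchain hne => ?_) I ⟨hI, hIS⟩
  exact ⟨⋃₀ c, ⟨isIdeal_sUnion (fun J hJ => (hc hJ).1) hchain hne,
    Set.disjoint_sUnion_left.mpr fun J hJ => (hc hJ).2⟩, fun J hJ => Set.subset_sUnion_of_mem hJ⟩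

lemma isPrimeIdeal_of_maximal_disjoint {S p : Set A} (hS : IsMultiplicative S)
    (hp : Maximal (fun J => IsIdeal J ∧ Disjoint J S) p) : IsPrimeIdeal p := by
  obtain ⟨⟨hpI, hpS⟩, hmax⟩ : (IsIdeal p ∧ Disjoint p S) ∧ _ := hp
  have meets_of_not_mem : ∀ a ∉ p, ∃ s ∈ S, s ∈ adjoinIdeal p a := by
    intro a ha
    by_contra! hdisj
    exact ha (hmax ⟨isIdeal_adjoinIdeal hpI a, Set.disjoint_right.mpr hdisj⟩ (subset_adjoinIdeal a)
      (mem_adjoinIdeal_self hpI a))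
  refine ⟨hpI, Set.disjoint_right.mp hpS hS.1, fun a b hab => ?_⟩
  by_contra! hab'
  obtain ⟨s₁, hs₁S, hs₁⟩ := meets_of_not_mem a hab'.1
  obtain ⟨s₂, hs₂S, hs₂⟩ := meets_of_not_mem b hab'.2
  have hs₂a : s₂ * a ∈ p := hpI.mul_mem_of_mem_adjoinIdeal hs₂ hab
  exact Set.disjoint_left.mp hpS (hpI.mul_mem_of_mem_adjoinIdeal hs₁ hs₂a) (hS.2 s₁ hs₁S s₂ hs₂S)

end Multiring

/-- Prime Ideal Theorem: an ideal disjoint from a multiplicative set is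
contained in a prime ideal disjoint from that set. -/
theorem prime_ideal_theorem {A : Type u} [Multiring A] (I S : Set A)
    (hI : Multiring.IsIdeal I) (hS : Multiring.IsMultiplicative S)
    (hIS : I ∩ S = ∅) :
    ∃ p : Set A, Multiring.IsPrimeIdeal p ∧ I ⊆ p ∧ p ∩ S = ∅ := by
  obtain ⟨p, hIp, hp⟩ :=
    Multiring.exists_maximal_isIdeal_disjoint hI (Set.disjoint_iff_inter_eq_empty.mpr hIS)
  exact ⟨p, Multiring.isPrimeIdeal_of_maximal_disjoint hS hp, hIp,
    Set.disjoint_iff_inter_eq_empty.mp hp.1.2⟩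
end

section
/- Let A be a multiring and I an ideal of A. Then I is a maximal ideal if and only if the quotient multiring A/I is a multifield. In particular, if A is a hyperring, then I is maximal if and only if A/I is a hyperfield. -/
universe u v

/-!
For `a ∉ I` the ideal `I + (a)` strictly contains `I`; if `I` is maximal it contains `1`, i.e.
`1 ∈ i + t₁a + ⋯ + tₙa` with `i ∈ I`, which says that `[a]` is weak-invertible in `A/I`.
Conversely, an ideal `J ⊋ I` contains some `a ∉ I`, hence every representative of a sum
`[at₁] + ⋯ + [atₙ]`, hence `1` once `[a]` is weak-invertible. In a hyperring strong
distributivity collapses `[at₁] + ⋯ + [atₙ]` to classes `[ab]`, so weak inverses are inverses.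
-/

namespace Multiring

variable {A : Type u} [Multiring A]

protected lemma neg_zero : (-0 : A) = 0 :=
  ((mem_madd_zero 0 (-0)).1 (madd_rev_left 0 0 0 ((mem_madd_zero 0 0).2 rfl))).symm

lemma zero_mem_madd_neg_self (a : A) : (0 : A) ∈ madd (-a) a :=
  madd_rev_left a a 0 ((mem_madd_zero a a).2 rfl)

lemma eq_neg_of_zero_mem_madd {u v : A} (h : (0 : A) ∈ madd u v) : v = -u :=
  (mem_madd_zero v (-u)).1 (madd_rev_left 0 u v h)

protected lemma neg_neg (a : A) : -(-a) = a :=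
  (eq_neg_of_zero_mem_madd (zero_mem_madd_neg_self a)).symm

protected lemma zero_mul (a : A) : (0 : A) * a = 0 := by
  rw [mul_comm]
  exact mul_zero' a

protected lemma neg_mul (a b : A) : -a * b = -(a * b) := by
  have h : (0 : A) ∈ madd (-a * b) (a * b) := by
    simpa only [Multiring.zero_mul] using madd_mul 0 (-a) a b (zero_mem_madd_neg_self a)
  rw [eq_neg_of_zero_mem_madd h, Multiring.neg_neg]

lemma mem_madd_of_mem_madd_neg {a b c : A} (h : a ∈ madd b (-c)) : b ∈ madd a c := by
  simpa only [Multiring.neg_neg] using madd_rev_right a b (-c) h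

lemma madd_medial {a b c d y z x : A} (hy : y ∈ madd a b) (hz : z ∈ madd c d)
    (hx : x ∈ madd y z) : ∃ g ∈ madd a c, ∃ h ∈ madd b d, x ∈ madd g h := by
  obtain ⟨k, hk, hxk⟩ := madd_assoc a b z y x hy hx
  rw [madd_comm] at hk
  obtain ⟨h, hh, hkh⟩ := madd_assoc c d b z k hz hk
  obtain ⟨g, hg, hxg⟩ := madd_assoc' hkh hxk
  rw [madd_comm] at hh
  exact ⟨g, hg, h, hh, hxg⟩

lemma mem_listSum_append_s3 {L₁ L₂ : List A} {y z x : A} (hy : y ∈ listSum L₁)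
    (hz : z ∈ listSum L₂) (hx : x ∈ madd y z) : x ∈ listSum (L₁ ++ L₂) := by
  induction L₁ generalizing y x with
  | nil =>
    obtain rfl : y = 0 := hy
    rw [madd_comm, mem_madd_zero] at hx
    rwa [List.nil_append, hx]
  | cons c L ih =>
    obtain ⟨w, hw, hyw⟩ := hy
    obtain ⟨h, hh, hxh⟩ := madd_assoc c w z y x hyw hx
    exact ⟨h, ih hw hh, hxh⟩

lemma mul_mem_listSum_map {L : List A} {x : A} (hx : x ∈ listSum L) (c : A) :
    x * c ∈ listSum (L.map (· * c)) := by
  induction L generalizing x with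
  | nil =>
    obtain rfl : x = 0 := hx
    exact Multiring.zero_mul c
  | cons d L ih =>
    obtain ⟨y, hy, hxy⟩ := hx
    exact ⟨y * c, ih hy, madd_mul x d y c hxy⟩

namespace IsIdeal

variable {I : Set A}

lemma zero_mem_s3 (hI : IsIdeal I) : (0 : A) ∈ I := by
  obtain ⟨b, hb⟩ := hI.1
  simpa only [Multiring.zero_mul] using hI.2.2 0 b hb

lemma neg_mem (hI : IsIdeal I) {x : A} (hx : x ∈ I) : -x ∈ I := by
  simpa only [Multiring.neg_mul, one_mul] using hI.2.2 (-1) x hx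

end IsIdeal

def addSet (S T : Set A) : Set A := {x | ∃ s ∈ S, ∃ t ∈ T, x ∈ madd s t}

lemma IsIdeal.addSet {S T : Set A} (hS : IsIdeal S) (hT : IsIdeal T) :
    IsIdeal (addSet S T) := by
  obtain ⟨s, hs⟩ := hS.1
  obtain ⟨t, ht⟩ := hT.1
  obtain ⟨x, hx⟩ := madd_nonempty s t
  refine ⟨⟨x, s, hs, t, ht, hx⟩, ?_, ?_⟩
  · rintro y ⟨s₁, hs₁, t₁, ht₁, hy⟩ z ⟨s₂, hs₂, t₂, ht₂, hz⟩ x hx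
    obtain ⟨g, hg, h, hh, hxgh⟩ := madd_medial hy hz hx
    exact ⟨g, hS.2.1 s₁ hs₁ s₂ hs₂ hg, h, hT.2.1 t₁ ht₁ t₂ ht₂ hh, hxgh⟩
  · rintro c x ⟨s, hs, t, ht, hx⟩
    refine ⟨c * s, hS.2.2 c s hs, c * t, hT.2.2 c t ht, ?_⟩
    simpa only [mul_comm c] using madd_mul x s t c hx

lemma mem_addSet_of_mem_left {S T : Set A} (hT : (0 : A) ∈ T) {s : A} (hs : s ∈ S) :
    s ∈ addSet S T :=
  ⟨s, hs, 0, hT, (mem_madd_zero s s).2 rfl⟩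

lemma mem_addSet_of_mem_right {S T : Set A} (hS : (0 : A) ∈ S) {t : A} (ht : t ∈ T) :
    t ∈ addSet S T :=
  ⟨0, hS, t, ht, by rw [madd_comm]; exact (mem_madd_zero t t).2 rfl⟩

lemma mem_genIdeal_self (x : A) : x ∈ genIdeal x := by
  refine ⟨[1], List.cons_ne_nil 1 [], 0, rfl, ?_⟩
  show x ∈ madd (1 * x) 0
  rw [one_mul, mem_madd_zero]

lemma isIdeal_genIdeal (x : A) : IsIdeal (genIdeal x) := by
  refine ⟨⟨x, mem_genIdeal_self x⟩, ?_, ?_⟩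
  · rintro y ⟨l₁, hl₁, hy⟩ z ⟨l₂, -, hz⟩ w hw
    refine ⟨l₁ ++ l₂, by simp [hl₁], ?_⟩
    rw [List.map_append]
    exact mem_listSum_append_s3 hy hz hw
  · rintro c y ⟨l, hl, hy⟩
    refine ⟨l.map (· * c), by simpa using hl, ?_⟩
    simpa only [List.map_map, Function.comp_def, mul_right_comm _ x c, mul_comm c y]
      using mul_mem_listSum_map hy c

variable {I : Set A}

lemma simI_zero_iff {a : A} : simI I a 0 ↔ a ∈ I := by
  simp only [simI, Multiring.neg_zero, mem_madd_zero, exists_eq_left]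

lemma simI.symm (hI : IsIdeal I) {a b : A} (h : simI I a b) : simI I b a := by
  obtain ⟨x, hx, hxI⟩ := h
  have hb : b ∈ madd (-x) a := madd_rev_left a x b (mem_madd_of_mem_madd_neg hx)
  exact ⟨-x, madd_rev_right b (-x) a hb, hI.neg_mem hxI⟩

lemma mem_qlistSumI_of_mem_madd_listSum (h0 : (0 : A) ∈ I) {L : List A} {z i x : A}
    (hz : z ∈ listSum L) (hi : i ∈ I) (hx : x ∈ madd z i) : x ∈ qlistSumI I L := by
  induction L generalizing z i x with
  | nil =>
    obtain rfl : z = 0 := hz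
    rw [madd_comm, mem_madd_zero] at hx
    exact simI_zero_iff.2 (hx ▸ hi)
  | cons c L ih =>
    obtain ⟨y, hy, hzy⟩ := hz
    obtain ⟨h, hh, hxh⟩ := madd_assoc c y i z x hzy hx
    exact ⟨y, ih hy h0 ((mem_madd_zero y y).2 rfl), i, hi, h, hh, hxh⟩

lemma qlistSumI_subset {J : Set A} (hJ : IsIdeal J) (hIJ : I ⊆ J) {L : List A}
    (hL : ∀ c ∈ L, c ∈ J) : qlistSumI I L ⊆ J := by
  induction L with
  | nil => exact fun x hx => hIJ (simI_zero_iff.1 hx)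
  | cons c L ih =>
    rintro x ⟨y, hy, i, hi, w, hw, hx⟩
    have hyJ : y ∈ J := ih (fun d hd => hL d (List.mem_cons_of_mem c hd)) hy
    exact hJ.2.1 c (hL c List.mem_cons_self) w (hJ.2.1 y hyJ i (hIJ hi) hw) hx

lemma mem_qlistSumI_singleton_of_simI (hI : IsIdeal I) {c x : A} (h : simI I c x) :
    x ∈ qlistSumI I [c] := by
  obtain ⟨i, hi, hiI⟩ := h
  have hx : x ∈ madd c (-i) := by
    have hc : c ∈ madd x i := by
      rw [madd_comm]
      exact mem_madd_of_mem_madd_neg hi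
    exact madd_rev_right c x i hc
  refine ⟨0, simI_zero_iff.2 hI.zero_mem_s3, -i, hI.neg_mem hiI, -i, ?_, hx⟩
  rw [madd_comm, mem_madd_zero]

lemma qmemI_of_simI_right (hI : IsIdeal I) {x c y y' : A} (hx : qmemI I x c y)
    (hy : simI I y y') : qmemI I x c y' := by
  obtain ⟨i, hi, w, hw, hxw⟩ := hx
  obtain ⟨u, hu, huI⟩ := hy
  have hy' : y ∈ madd y' u := by
    rw [madd_comm]
    exact mem_madd_of_mem_madd_neg hu
  obtain ⟨j, hj, hwj⟩ := madd_assoc y' u i y w hy' hw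
  exact ⟨j, hI.2.1 u huI i hi hj, w, hwj, hxw⟩

lemma exists_simI_mul_of_qmemI (hH : IsHyperring A) {x a b c : A}
    (hx : qmemI I x (a * b) (a * c)) : ∃ e, simI I x (a * e) := by
  obtain ⟨i, hi, w, hw, hxw⟩ := hx
  obtain ⟨g, hg, hxg⟩ := madd_assoc' hw hxw
  obtain ⟨e, -, rfl⟩ := hH g b c a (by simpa only [mul_comm a] using hg)
  refine ⟨e, i, ?_, hi⟩
  rw [mul_comm a e, madd_comm]
  exact madd_rev_left x (e * a) i hxg

lemma exists_simI_mul_of_mem_qlistSumI (hI : IsIdeal I) (hH : IsHyperring A) {a : A}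
    {l : List A} {x : A} (hx : x ∈ qlistSumI I (l.map (a * ·))) : ∃ b, simI I x (a * b) := by
  induction l generalizing x with
  | nil => exact ⟨0, by rwa [mul_zero']⟩
  | cons c l ih =>
    obtain ⟨y, hy, hxy⟩ := hx
    obtain ⟨b, hb⟩ := ih hy
    exact exists_simI_mul_of_qmemI hH (qmemI_of_simI_right hI hxy hb)

lemma IsMaximalIdeal.quotIsMultifield (hM : IsMaximalIdeal I) : QuotIsMultifield I := by
  obtain ⟨hI, h1I, hmax⟩ := hM
  refine ⟨fun h => h1I (simI_zero_iff.1 h), fun a ha => ?_⟩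
  have hJ := hI.addSet (isIdeal_genIdeal a)
  have hIJ : I ⊆ addSet I (genIdeal a) :=
    fun i hi => mem_addSet_of_mem_left (isIdeal_genIdeal a).zero_mem_s3 hi
  have haJ : a ∈ addSet I (genIdeal a) :=
    mem_addSet_of_mem_right hI.zero_mem_s3 (mem_genIdeal_self a)
  have h1J : (1 : A) ∈ addSet I (genIdeal a) := by
    by_contra h1J
    exact ha (simI_zero_iff.2 (hmax _ hJ h1J hIJ ▸ haJ))
  obtain ⟨i, hi, z, ⟨l, hl, hz⟩, h1⟩ := h1J
  refine ⟨l, hl, ?_⟩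
  rw [madd_comm] at h1
  simpa only [mul_comm a] using mem_qlistSumI_of_mem_madd_listSum hI.zero_mem_s3 hz hi h1

lemma IsIdeal.isMaximalIdeal_of_quotIsMultifield (hI : IsIdeal I) (hQ : QuotIsMultifield I) :
    IsMaximalIdeal I := by
  refine ⟨hI, fun h1 => hQ.1 (simI_zero_iff.2 h1), fun J hJ h1J hIJ => ?_⟩
  refine Set.Subset.antisymm (fun a haJ => ?_) hIJ
  by_contra haI
  obtain ⟨l, -, h1⟩ := hQ.2 a fun h => haI (simI_zero_iff.1 h)
  have hl : ∀ c ∈ l.map (a * ·), c ∈ J := by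
    simpa only [List.forall_mem_map, mul_comm a] using fun b _ => hJ.2.2 b a haJ
  exact h1J (qlistSumI_subset hJ hIJ hl h1)

lemma QuotIsMultifield.quotIsHyperfield (hI : IsIdeal I) (hH : IsHyperring A)
    (hQ : QuotIsMultifield I) : QuotIsHyperfield I := by
  refine ⟨hQ.1, fun a ha => ?_⟩
  obtain ⟨l, -, h1⟩ := hQ.2 a ha
  obtain ⟨b, hb⟩ := exists_simI_mul_of_mem_qlistSumI hI hH h1
  exact ⟨b, hb.symm hI⟩

lemma QuotIsHyperfield.quotIsMultifield (hI : IsIdeal I) (hQ : QuotIsHyperfield I) :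
    QuotIsMultifield I := by
  refine ⟨hQ.1, fun a ha => ?_⟩
  obtain ⟨b, hb⟩ := hQ.2 a ha
  exact ⟨[b], List.cons_ne_nil b [], mem_qlistSumI_singleton_of_simI hI hb⟩

end Multiring

/-- An ideal `I` is maximal iff the quotient multiring `A/I` is a multifield;
and, if `A` is a hyperring, `I` is maximal iff `A/I` is a hyperfield. -/
theorem maximal_iff_quotient_multifield {A : Type u} [Multiring A] (I : Set A)
    (hI : Multiring.IsIdeal I) :
    (Multiring.IsMaximalIdeal I ↔ Multiring.QuotIsMultifield I) ∧
    (Multiring.IsHyperring A →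
      (Multiring.IsMaximalIdeal I ↔ Multiring.QuotIsHyperfield I)) := by
  have hmax : Multiring.IsMaximalIdeal I ↔ Multiring.QuotIsMultifield I :=
    ⟨fun hM => hM.quotIsMultifield, hI.isMaximalIdeal_of_quotIsMultifield⟩
  exact ⟨hmax, fun hH => hmax.trans
    ⟨fun hQ => hQ.quotIsHyperfield hI hH, fun hQ => hQ.quotIsMultifield hI⟩⟩
end
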